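/- arXiv:2309.10928 — 3 statements merged into one kernel-verified Lean document; each statement's English description precedes it below -/
import Mathlib

section
/- Let G = (V,E) be a finite multigraph and let e = uv ∈ E. Then Z_G(x) = Z_{G/e}(x) + Σ_{P ∈ 𝓟_{G,u,v}} x^{|P|} Z_{G/P}(x), where Z_H(x) is the forest generating function of H, G/e is the multigraph obtained by contracting e (keeping parallel edges and loops), G/P is obtained by contracting the path P, and 𝓟_{G,u,v} is the set of paths from u to v in G. -/
open Finset

attribute [local instance] Classical.propDecidable

variable {V E : Type} [Fintype V] [Fintype E] [DecidableEq V] [DecidableEq E]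

/-- `chainOk ends vs es`: the vertex list `vs` and edge list `es` form a walk. -/
def chainOk (ends : E → Sym2 V) : List V → List E → Prop
  | [_], [] => True
  | a :: b :: vs, e :: es => ends e = s(a, b) ∧ chainOk ends (b :: vs) es
  | _, _ => False

/-- `es` is (the edge list of) a path from `u` to `v`: a walk with distinct vertices. -/
def IsPathList (ends : E → Sym2 V) (u v : V) (es : List E) : Prop :=
  ∃ vs : List V, vs.Nodup ∧ vs.head? = some u ∧ vs.getLast? = some v ∧ chainOk ends vs es

/-- `P` is the edge set of a path from `u` to `v`. -/
def IsPathSet (ends : E → Sym2 V) (u v : V) (P : Finset E) : Prop :=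
  ∃ es : List E, es.Nodup ∧ es.toFinset = P ∧ IsPathList ends u v es

/-- The set `𝓟_{G,u,v}` of (edge sets of) paths from `u` to `v`. -/
noncomputable def pathSets (ends : E → Sym2 V) (u v : V) : Finset (Finset E) :=
  Finset.univ.filter (IsPathSet ends u v)

/-- `F` contains a cycle (a loop, a pair of parallel edges, or a longer cycle). -/
def HasCycle (ends : E → Sym2 V) (F : Finset E) : Prop :=
  ∃ es : List E, es ≠ [] ∧ es.Nodup ∧ (∀ e ∈ es, e ∈ F) ∧
    ∃ vs : List V, chainOk ends vs es ∧ vs.head? = vs.getLast? ∧ vs.dropLast.Nodup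

/-- The forest (acyclic edge subset) generating function of the multigraph with
edge-end map `ends`, restricted to edges outside `D` (the deleted/contracted edges). -/
noncomputable def ZmultOn (ends : E → Sym2 V) (D : Finset E) (x : ℝ) : ℝ :=
  ∑ F ∈ (Finset.univ \ D).powerset.filter (fun F => ¬ HasCycle ends F), x ^ F.card

/-- The forest generating function `Z_G(x)` of a multigraph. -/
noncomputable def Zmult (ends : E → Sym2 V) (x : ℝ) : ℝ :=
  ZmultOn ends ∅ x

/-!
A forest of `G` contains at most one `u`–`v` path, since two distinct ones close a cycle.
Contracting a tree `P` neither creates nor destroys cycles among the other edges: a cycle of `G/P`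
lifts to a cycle of `G` by reconnecting its ends through `P`, and a cycle of `G` inside `F ∪ P`
must use an edge of `F`, whose ends stay joined in `G/P` once the edges of `P` collapse. Hence
`F ↦ F \ P` matches the forests of `G` containing the path `P` with the forests of `G/P`, and the
forests of `G` containing no `u`–`v` path are exactly the forests of `G/e`: adding `e` to a forest
creates a cycle exactly when the forest already joins `u` to `v`.

Cycles are detected by the criterion that some edge has its ends joined by the remaining edges,
joinedness being `Relation.ReflTransGen` of the adjacency relation.
-/

open Relation

section Walks

variable {V E : Type} {ends : E → Sym2 V}

def Adj (ends : E → Sym2 V) (S : Finset E) (a b : V) : Prop :=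
  ∃ f ∈ S, ends f = s(a, b)

theorem Adj.symm {S : Finset E} {a b : V} (h : Adj ends S a b) : Adj ends S b a :=
  let ⟨f, hf, hab⟩ := h
  ⟨f, hf, hab.trans Sym2.eq_swap⟩

instance (S : Finset E) : Std.Symm (Adj ends S) :=
  ⟨fun _ _ => Adj.symm⟩

theorem reflTransGen_adj_symm {S : Finset E} {a b : V} (h : ReflTransGen (Adj ends S) a b) :
    ReflTransGen (Adj ends S) b a :=
  Std.Symm.symm _ _ h

theorem reflTransGen_adj_mono {S T : Finset E} (hST : S ⊆ T) {a b : V}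
    (h : ReflTransGen (Adj ends S) a b) : ReflTransGen (Adj ends T) a b :=
  ReflTransGen.mono (fun _ _ ⟨f, hf, hab⟩ => ⟨f, hST hf, hab⟩) _ _ h

theorem chainOk_nil_left {es : List E} : ¬chainOk ends [] es := by
  cases es <;> simp [chainOk]

theorem chainOk_nil_right {vs : List V} : chainOk ends vs [] ↔ ∃ x, vs = [x] := by
  match vs with
  | [] => simp [chainOk]
  | [_] => simp [chainOk]
  | _ :: _ :: _ => simp [chainOk]

theorem chainOk_cons_cons_iff {x : V} {vs : List V} {f : E} {es : List E} :
    chainOk ends (x :: vs) (f :: es) ↔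
      ∃ y vs', vs = y :: vs' ∧ ends f = s(x, y) ∧ chainOk ends (y :: vs') es := by
  cases vs <;> simp [chainOk]

theorem chainOk.mem_of_mem_ends {vs : List V} {es : List E} (h : chainOk ends vs es) {f : E}
    (hf : f ∈ es) {w : V} (hw : w ∈ ends f) : w ∈ vs := by
  induction es generalizing vs with
  | nil => cases hf
  | cons g es ih =>
    cases vs with
    | nil => exact absurd h chainOk_nil_left
    | cons x vs =>
      obtain ⟨y, vs', rfl, hg, h⟩ := chainOk_cons_cons_iff.1 h
      rcases List.mem_cons.1 hf with rfl | hf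
      · rw [hg, Sym2.mem_iff] at hw
        rcases hw with rfl | rfl <;> simp
      · exact List.mem_cons_of_mem x (ih h hf)

theorem chainOk.nodup {vs : List V} {es : List E} (h : chainOk ends vs es) (hvs : vs.Nodup) :
    es.Nodup := by
  induction es generalizing vs with
  | nil => exact List.nodup_nil
  | cons f es ih =>
    cases vs with
    | nil => exact absurd h chainOk_nil_left
    | cons x vs =>
      obtain ⟨y, vs', rfl, hf, h⟩ := chainOk_cons_cons_iff.1 h
      obtain ⟨hx, hvs⟩ := List.nodup_cons.1 hvs
      exact List.nodup_cons.2
        ⟨fun hmem => hx (h.mem_of_mem_ends hmem (hf ▸ Sym2.mem_mk_left x y)), ih h hvs⟩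

theorem chainOk.exists_suffix {s t : List V} {w : V} {es : List E}
    (h : chainOk ends (s ++ w :: t) es) : ∃ es', es' <:+ es ∧ chainOk ends (w :: t) es' := by
  induction s generalizing es with
  | nil => exact ⟨es, List.suffix_refl es, h⟩
  | cons x s ih =>
    cases es with
    | nil => simp [chainOk_nil_right] at h
    | cons f es =>
      obtain ⟨y, vs', hvs, -, h⟩ := chainOk_cons_cons_iff.1 h
      rw [← hvs] at h
      obtain ⟨es', hsuf, h'⟩ := ih h
      exact ⟨es', hsuf.trans (List.suffix_cons f es), h'⟩

theorem exists_isPathList_of_reflTransGen {S : Finset E} {a b : V}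
    (h : ReflTransGen (Adj ends S) a b) :
    ∃ es, (∀ f ∈ es, f ∈ S) ∧ IsPathList ends a b es := by
  induction h using ReflTransGen.head_induction_on with
  | refl => exact ⟨[], by simp, [b], List.nodup_singleton b, rfl, rfl, trivial⟩
  | @head a c hac _ ih =>
    obtain ⟨f, hfS, hf⟩ := hac
    obtain ⟨es, hesS, vs, hnd, hc, hb, hch⟩ := ih
    by_cases ha : a ∈ vs
    · -- `a` already lies on the path: cut the path at `a`
      obtain ⟨s, t, rfl⟩ := List.append_of_mem ha
      obtain ⟨es', hsuf, hch'⟩ := hch.exists_suffix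
      exact ⟨es', fun f hf => hesS f (hsuf.subset hf), a :: t,
        hnd.sublist (List.sublist_append_right s _), rfl,
        (List.getLast?_append_cons s a t) ▸ hb, hch'⟩
    · cases vs with
      | nil => simp at hc
      | cons c' vs =>
        obtain rfl : c' = c := Option.some.inj hc
        refine ⟨f :: es, ?_, a :: c' :: vs, List.nodup_cons.2 ⟨ha, hnd⟩, rfl,
          by rwa [List.getLast?_cons_cons], hf, hch⟩
        simpa using ⟨hfS, hesS⟩

theorem IsPathList.nodup {u v : V} {es : List E} (h : IsPathList ends u v es) : es.Nodup :=
  let ⟨_, hnd, _, _, hch⟩ := h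
  hch.nodup hnd

theorem HasCycle.mono {F F' : Finset E} (h : HasCycle ends F) (hF : F ⊆ F') :
    HasCycle ends F' :=
  let ⟨es, hne, hnd, hes, rest⟩ := h
  ⟨es, hne, hnd, fun f hf => hF (hes f hf), rest⟩

variable [DecidableEq E]

theorem chainOk.reflTransGen_of_mem {vs : List V} {es : List E} (h : chainOk ends vs es)
    {a w : V} (ha : vs.head? = some a) (hw : w ∈ vs) :
    ReflTransGen (Adj ends es.toFinset) a w := by
  induction es generalizing vs a with
  | nil =>
    obtain ⟨x, rfl⟩ := chainOk_nil_right.1 h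
    simp only [List.head?_cons, Option.some.injEq, List.mem_singleton] at ha hw
    exact hw ▸ ha ▸ .refl
  | cons f es ih =>
    cases vs with
    | nil => exact absurd h chainOk_nil_left
    | cons x vs =>
      obtain ⟨y, vs', rfl, hf, h⟩ := chainOk_cons_cons_iff.1 h
      obtain rfl : x = a := Option.some.inj ha
      rcases List.mem_cons.1 hw with rfl | hw
      · exact .refl
      · refine .head ⟨f, by simp, hf⟩ (reflTransGen_adj_mono ?_ (ih h rfl hw))
        simp

theorem chainOk.exists_split {vs : List V} {es₁ es₂ : List E} {g : E}
    (h : chainOk ends vs (es₁ ++ g :: es₂)) {x y : V} (hx : vs.head? = some x)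
    (hy : vs.getLast? = some y) :
    ∃ a b, ends g = s(a, b) ∧ ReflTransGen (Adj ends es₁.toFinset) x a ∧
      ReflTransGen (Adj ends es₂.toFinset) b y := by
  induction es₁ generalizing vs x with
  | nil =>
    cases vs with
    | nil => exact absurd h chainOk_nil_left
    | cons z vs =>
      obtain ⟨b, vs', rfl, hg, h⟩ := chainOk_cons_cons_iff.1 h
      obtain rfl : z = x := Option.some.inj hx
      rw [List.getLast?_cons_cons] at hy
      exact ⟨z, b, hg, .refl, h.reflTransGen_of_mem rfl (List.mem_of_getLast? hy)⟩
  | cons f es₁ ih =>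
    cases vs with
    | nil => exact absurd h chainOk_nil_left
    | cons z vs =>
      obtain ⟨w, vs', rfl, hf, h⟩ := chainOk_cons_cons_iff.1 h
      obtain rfl : z = x := Option.some.inj hx
      rw [List.getLast?_cons_cons] at hy
      obtain ⟨a, b, hg, hwa, hby⟩ := ih h rfl hy
      refine ⟨a, b, hg, .head ⟨f, by simp, hf⟩ (reflTransGen_adj_mono ?_ hwa), hby⟩
      simp

theorem exists_isPathSet_of_reflTransGen {S : Finset E} {a b : V}
    (h : ReflTransGen (Adj ends S) a b) : ∃ Q ⊆ S, IsPathSet ends a b Q := by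
  obtain ⟨es, hesS, hes⟩ := exists_isPathList_of_reflTransGen h
  exact ⟨es.toFinset, fun f hf => hesS f (List.mem_toFinset.1 hf), es, hes.nodup, rfl, hes⟩

theorem IsPathSet.reflTransGen {u v : V} {P : Finset E} (h : IsPathSet ends u v P) :
    ReflTransGen (Adj ends P) u v := by
  obtain ⟨es, -, rfl, vs, -, hu, hv, hch⟩ := h
  exact hch.reflTransGen_of_mem hu (List.mem_of_getLast? hv)

theorem hasCycle_of_reflTransGen {F : Finset E} {g : E} {a b : V} (hg : g ∈ F)
    (hab : ends g = s(a, b)) (h : ReflTransGen (Adj ends (F.erase g)) b a) : HasCycle ends F := by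
  obtain ⟨es, hes, vs, hnd, hb, ha, hch⟩ := exists_isPathList_of_reflTransGen h
  cases vs with
  | nil => simp at hb
  | cons b' vs =>
    obtain rfl : b' = b := Option.some.inj hb
    have hdrop : ((b' :: vs).dropLast ++ [a]).Nodup := by
      rwa [List.dropLast_append_getLast? a ha]
    refine ⟨g :: es, List.cons_ne_nil _ _,
      List.nodup_cons.2 ⟨fun hmem => by simpa using hes g hmem, hch.nodup hnd⟩, ?_,
      a :: b' :: vs, ⟨hab, hch⟩, by rw [List.getLast?_cons_cons, ha]; rfl, ?_⟩
    · intro f hf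
      rcases List.mem_cons.1 hf with rfl | hf
      exacts [hg, Finset.mem_of_mem_erase (hes f hf)]
    · rw [List.dropLast_cons_cons]
      simp only [List.nodup_append, List.nodup_cons, List.mem_singleton] at hdrop ⊢
      exact ⟨fun hmem => hdrop.2.2 a hmem a rfl rfl, hdrop.1⟩

theorem hasCycle_iff_exists {F : Finset E} :
    HasCycle ends F ↔ ∃ Z ⊆ F, Z.Nonempty ∧
      ∀ g ∈ Z, ∃ a b, ends g = s(a, b) ∧ ReflTransGen (Adj ends (Z.erase g)) b a := by
  constructor
  · rintro ⟨es, hne, hnd, hF, vs, hch, hclosed, -⟩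
    cases vs with
    | nil => exact absurd hch chainOk_nil_left
    | cons x vs =>
      refine ⟨es.toFinset, fun f hf => hF f (List.mem_toFinset.1 hf),
        (List.toFinset_nonempty_iff es).2 hne, fun g hg => ?_⟩
      obtain ⟨es₁, es₂, rfl⟩ := List.append_of_mem (List.mem_toFinset.1 hg)
      obtain ⟨a, b, hab, hxa, hbx⟩ := hch.exists_split rfl hclosed.symm
      have hg' : g ∉ es₁ ++ es₂ := (List.nodup_cons.1 (List.nodup_middle.1 hnd)).1
      have hsub :
          ∀ es' ⊆ es₁ ++ es₂, es'.toFinset ⊆ (es₁ ++ g :: es₂).toFinset.erase g := by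
        intro es' hes' f hf
        have hf' := hes' (List.mem_toFinset.1 hf)
        refine Finset.mem_erase.2 ⟨fun hfg => hg' (hfg ▸ hf'), ?_⟩
        simp only [List.mem_toFinset, List.mem_append, List.mem_cons] at hf' ⊢
        tauto
      exact ⟨a, b, hab,
        (reflTransGen_adj_mono (hsub es₂ (List.subset_append_right _ _)) hbx).trans
          (reflTransGen_adj_mono (hsub es₁ (List.subset_append_left _ _)) hxa)⟩
  · rintro ⟨Z, hZF, ⟨g, hg⟩, hZ⟩
    obtain ⟨a, b, hab, hba⟩ := hZ g hg
    exact (hasCycle_of_reflTransGen hg hab hba).mono hZF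

theorem not_hasCycle_insert {F : Finset E} {g : E} {a b : V} (hF : ¬HasCycle ends F)
    (hb : ∀ f ∈ F, b ∉ ends f) (hg : ends g = s(a, b)) (hab : a ≠ b) :
    ¬HasCycle ends (insert g F) := by
  intro h
  obtain ⟨Z, hZ, hne, hcyc⟩ := hasCycle_iff_exists.1 h
  by_cases hgZ : g ∈ Z
  · obtain ⟨a', b', hab', hreach⟩ := hcyc g hgZ
    have hZF : Z.erase g ⊆ F := fun f hf =>
      (mem_insert.1 (hZ (mem_of_mem_erase hf))).resolve_left (ne_of_mem_erase hf)
    have hisolated : ∀ c, ReflTransGen (Adj ends F) b c → c = b := by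
      intro c hc
      rcases hc.cases_head with rfl | ⟨d, ⟨f, hf, hfd⟩, -⟩
      · rfl
      · exact absurd (hfd ▸ Sym2.mem_mk_left b d) (hb f hf)
    have hreach' := reflTransGen_adj_mono hZF hreach
    rw [hg, Sym2.eq_iff] at hab'
    rcases hab' with ⟨rfl, rfl⟩ | ⟨rfl, rfl⟩
    · exact hab (hisolated _ hreach')
    · exact hab (hisolated _ (reflTransGen_adj_symm hreach'))
  · refine hF (hasCycle_iff_exists.2 ⟨Z, fun f hf => ?_, hne, hcyc⟩)
    exact (Finset.mem_insert.1 (hZ hf)).resolve_left (fun hfg => hgZ (hfg ▸ hf))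

theorem IsPathSet.not_hasCycle {u v : V} {P : Finset E} (h : IsPathSet ends u v P) :
    ¬HasCycle ends P := by
  obtain ⟨es, -, rfl, vs, hnd, hu, -, hch⟩ := h
  induction es generalizing vs u with
  | nil =>
    rintro ⟨es, hne, -, hes, -⟩
    cases es with
    | nil => exact hne rfl
    | cons f _ => simpa using hes f List.mem_cons_self
  | cons f es ih =>
    cases vs with
    | nil => exact absurd hch chainOk_nil_left
    | cons x vs =>
      obtain ⟨w, vs', rfl, hf, hch⟩ := chainOk_cons_cons_iff.1 hch
      obtain rfl : x = u := Option.some.inj hu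
      obtain ⟨hx, hnd⟩ := List.nodup_cons.1 hnd
      rw [List.toFinset_cons]
      exact not_hasCycle_insert (ih (w :: vs') hnd rfl hch)
        (fun g hg hxg => hx (hch.mem_of_mem_ends (List.mem_toFinset.1 hg) hxg))
        (hf.trans Sym2.eq_swap) (fun hwx => hx (hwx ▸ List.mem_cons_self))

end Walks

section Paths

variable {V E : Type} {ends : E → Sym2 V} [DecidableEq E] {u v : V}

theorem IsPathSet.hasCycle_union_of_mem_of_notMem {P Q : Finset E} (hP : IsPathSet ends u v P)
    (hQ : IsPathSet ends u v Q) {g : E} (hgP : g ∈ P) (hgQ : g ∉ Q) :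
    HasCycle ends (P ∪ Q) := by
  have hQuv := hQ.reflTransGen
  obtain ⟨es, hnd, rfl, vs, -, hu, hv, hch⟩ := hP
  obtain ⟨es₁, es₂, rfl⟩ := List.append_of_mem (List.mem_toFinset.1 hgP)
  obtain ⟨a, b, hab, hua, hbv⟩ := hch.exists_split hu hv
  have hg : g ∉ es₁ ++ es₂ := (List.nodup_cons.1 (List.nodup_middle.1 hnd)).1
  have hsub : ∀ T : Finset E, (∀ f ∈ T, f ∈ es₁ ++ es₂ ∨ f ∈ Q) →
      T ⊆ ((es₁ ++ g :: es₂).toFinset ∪ Q).erase g := by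
    intro T hT f hf
    have hf' := hT f hf
    refine Finset.mem_erase.2 ⟨?_, ?_⟩
    · rintro rfl
      exact hf'.elim hg hgQ
    · simp only [Finset.mem_union, List.mem_toFinset, List.mem_append, List.mem_cons] at hf' ⊢
      tauto
  -- `b` reaches `a` by running along `P` to `v`, back along `Q` to `u`, then along `P` to `a`
  refine hasCycle_of_reflTransGen (Finset.mem_union_left _ hgP) hab ?_
  refine (reflTransGen_adj_mono (hsub _ fun f hf => ?_) hbv).trans
    ((reflTransGen_adj_symm (reflTransGen_adj_mono (hsub Q fun f hf => .inr hf) hQuv)).trans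
      (reflTransGen_adj_mono (hsub _ fun f hf => ?_) hua))
  · exact .inl (List.mem_append_right _ (List.mem_toFinset.1 hf))
  · exact .inl (List.mem_append_left _ (List.mem_toFinset.1 hf))

theorem IsPathSet.eq_of_not_hasCycle {P Q F : Finset E} (hP : IsPathSet ends u v P)
    (hQ : IsPathSet ends u v Q) (hF : ¬HasCycle ends F) (hPF : P ⊆ F) (hQF : Q ⊆ F) :
    P = Q := by
  by_contra hne
  obtain ⟨g, hgP, hgQ⟩ | ⟨g, hgQ, hgP⟩ : (∃ g ∈ P, g ∉ Q) ∨ ∃ g ∈ Q, g ∉ P := by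
    by_contra! h
    exact hne (Finset.Subset.antisymm h.1 h.2)
  · exact hF ((hP.hasCycle_union_of_mem_of_notMem hQ hgP hgQ).mono (Finset.union_subset hPF hQF))
  · exact hF ((hQ.hasCycle_union_of_mem_of_notMem hP hgQ hgP).mono (Finset.union_subset hQF hPF))

theorem hasCycle_union_singleton_iff {F : Finset E} {e : E} (heF : e ∉ F)
    (he : ends e = s(u, v)) :
    HasCycle ends (F ∪ {e}) ↔ HasCycle ends F ∨ ∃ Q ⊆ F, IsPathSet ends u v Q := by
  constructor
  · intro h
    by_contra! hF
    obtain ⟨Z, hZ, hne, hcyc⟩ := hasCycle_iff_exists.1 h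
    have hZF : Z.erase e ⊆ F := fun f hf =>
      (Finset.mem_union.1 (hZ (Finset.mem_of_mem_erase hf))).resolve_right
        (fun hfe => Finset.ne_of_mem_erase hf (Finset.mem_singleton.1 hfe))
    have heZ : e ∈ Z := by
      by_contra heZ
      exact hF.1 (hasCycle_iff_exists.2 ⟨Z, by rwa [← erase_eq_of_notMem heZ], hne, hcyc⟩)
    obtain ⟨a, b, hab, hba⟩ := hcyc e heZ
    have huv : ReflTransGen (Adj ends F) u v := by
      rw [he, Sym2.eq_iff] at hab
      rcases hab with ⟨rfl, rfl⟩ | ⟨rfl, rfl⟩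
      · exact reflTransGen_adj_symm (reflTransGen_adj_mono hZF hba)
      · exact reflTransGen_adj_mono hZF hba
    obtain ⟨Q, hQF, hQ⟩ := exists_isPathSet_of_reflTransGen huv
    exact hF.2 Q hQF hQ
  · rintro (h | ⟨Q, hQF, hQ⟩)
    · exact h.mono Finset.subset_union_left
    · refine hasCycle_of_reflTransGen (Finset.mem_union_right _ (Finset.mem_singleton_self e)) he
        (reflTransGen_adj_symm (reflTransGen_adj_mono (fun f hf => ?_) hQ.reflTransGen))
      exact mem_erase.2 ⟨fun hfe => heF (hfe ▸ hQF hf), mem_union_left _ (hQF hf)⟩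

theorem isPathSet_singleton {e : E} (huv : u ≠ v) (he : ends e = s(u, v)) :
    IsPathSet ends u v {e} :=
  ⟨[e], List.nodup_singleton e, by simp, [u, v], by simp [huv], rfl, rfl, he, trivial⟩

end Paths

section Contraction

variable {V E : Type} {ends : E → Sym2 V}

/-- With `ends' f = (ends f).map r`, `ends'` is the contraction `G/P`: `r` sends onto `u` a
`P`-connected set of vertices containing all ends of `P`, and fixes every other vertex. -/
structure IsContraction (ends : E → Sym2 V) (P : Finset E) (u : V) (r : V → V) : Prop where
  map_eq_self : ∀ w, r w ≠ u → r w = w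
  reflTransGen : ∀ w, r w = u → ReflTransGen (Adj ends P) u w
  map_eq_of_mem_ends : ∀ f ∈ P, ∀ w ∈ ends f, r w = u

theorem Sym2.exists_eq_mk_of_map_eq {r : V → V} {z : Sym2 V} {a b : V} (h : z.map r = s(a, b)) :
    ∃ a' b', z = s(a', b') ∧ r a' = a ∧ r b' = b := by
  induction z using Sym2.ind with
  | _ x y =>
    rw [Sym2.map_mk, Sym2.eq_iff] at h
    rcases h with ⟨rfl, rfl⟩ | ⟨rfl, rfl⟩
    exacts [⟨x, y, rfl, rfl, rfl⟩, ⟨y, x, Sym2.eq_swap, rfl, rfl⟩]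

namespace IsContraction

variable {P : Finset E} {u : V} {r : V → V}

theorem reflTransGen_of_map_eq (hr : IsContraction ends P u r) {x y : V} (hxy : r x = r y) :
    ReflTransGen (Adj ends P) x y := by
  by_cases hx : r x = u
  · exact (reflTransGen_adj_symm (hr.reflTransGen x hx)).trans (hr.reflTransGen y (hxy ▸ hx))
  · obtain rfl : x = y :=
      (hr.map_eq_self x hx).symm.trans (hxy.trans (hr.map_eq_self y (hxy ▸ hx)))
    exact .refl

variable [DecidableEq E]

theorem reflTransGen_map (hr : IsContraction ends P u r) {S : Finset E} {x y : V}
    (h : ReflTransGen (Adj ends (S ∪ P)) x y) :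
    ReflTransGen (Adj (fun f => (ends f).map r) S) (r x) (r y) := by
  induction h with
  | refl => exact .refl
  | @tail b c _ hbc ih =>
    obtain ⟨f, hf, hbc⟩ := hbc
    rcases Finset.mem_union.1 hf with hf | hf
    · exact ih.tail ⟨f, hf, by simp only [hbc, Sym2.map_mk]⟩
    · rwa [hr.map_eq_of_mem_ends f hf c (hbc ▸ Sym2.mem_mk_right b c),
        ← hr.map_eq_of_mem_ends f hf b (hbc ▸ Sym2.mem_mk_left b c)]

theorem reflTransGen_of_map (hr : IsContraction ends P u r) {S : Finset E} {x y : V}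
    (h : ReflTransGen (Adj (fun f => (ends f).map r) S) (r x) (r y)) :
    ReflTransGen (Adj ends (S ∪ P)) x y := by
  suffices ∀ a, ReflTransGen (Adj (fun f => (ends f).map r) S) a (r y) →
      ∀ x, r x = a → ReflTransGen (Adj ends (S ∪ P)) x y from this _ h x rfl
  intro a ha
  induction ha using ReflTransGen.head_induction_on with
  | refl =>
    exact fun x hx => reflTransGen_adj_mono subset_union_right (hr.reflTransGen_of_map_eq hx)
  | head hac _ ih =>
    intro x hx
    obtain ⟨f, hfS, hf⟩ := hac
    obtain ⟨a', c', hf', rfl, rfl⟩ := Sym2.exists_eq_mk_of_map_eq hf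
    exact (reflTransGen_adj_mono Finset.subset_union_right (hr.reflTransGen_of_map_eq hx)).trans
      (.head ⟨f, Finset.mem_union_left _ hfS, hf'⟩ (ih c' rfl))

theorem hasCycle_iff (hr : IsContraction ends P u r) (hP : ¬HasCycle ends P) {F : Finset E}
    (hFP : Disjoint F P) : HasCycle (fun f => (ends f).map r) F ↔ HasCycle ends (F ∪ P) := by
  constructor
  · intro h
    obtain ⟨Z, hZF, ⟨g, hg⟩, hZ⟩ := hasCycle_iff_exists.1 h
    obtain ⟨a, b, hab, hba⟩ := hZ g hg
    obtain ⟨a', b', hab', rfl, rfl⟩ := Sym2.exists_eq_mk_of_map_eq hab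
    refine hasCycle_of_reflTransGen (Finset.mem_union_left _ (hZF hg)) hab'
      (reflTransGen_adj_mono (fun f hf => ?_) (hr.reflTransGen_of_map hba))
    rcases Finset.mem_union.1 hf with hf | hf
    · exact Finset.mem_erase.2
        ⟨Finset.ne_of_mem_erase hf, Finset.mem_union_left _ (hZF (Finset.mem_of_mem_erase hf))⟩
    · exact Finset.mem_erase.2
        ⟨fun hfg => disjoint_left.1 hFP (hZF hg) (hfg ▸ hf), mem_union_right _ hf⟩
  · intro h
    obtain ⟨Z, hZ, hne, hcyc⟩ := hasCycle_iff_exists.1 h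
    -- the cycle cannot lie inside the forest `P`
    obtain ⟨g, hgZ, hgP⟩ : ∃ g ∈ Z, g ∉ P := by
      by_contra! hZP
      exact hP (hasCycle_iff_exists.2 ⟨Z, hZP, hne, hcyc⟩)
    obtain ⟨a, b, hab, hba⟩ := hcyc g hgZ
    refine hasCycle_of_reflTransGen ((Finset.mem_union.1 (hZ hgZ)).resolve_right hgP)
      (by simp only [hab, Sym2.map_mk])
      (hr.reflTransGen_map (reflTransGen_adj_mono (fun f hf => ?_) hba))
    have hf' := hZ (Finset.mem_of_mem_erase hf)
    rcases Finset.mem_union.1 hf' with hfF | hfP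
    · exact Finset.mem_union_left _ (Finset.mem_erase.2 ⟨Finset.ne_of_mem_erase hf, hfF⟩)
    · exact Finset.mem_union_right _ hfP

end IsContraction

theorem IsPathSet.isContraction [DecidableEq V] [DecidableEq E] {u v : V} {P : Finset E}
    (hP : IsPathSet ends u v P) :
    IsContraction ends P u
      (fun w => if w = u ∨ w = v ∨ ∃ g ∈ P, w ∈ ends g then u else w) where
  map_eq_self w hw := by
    split_ifs at hw ⊢
    · exact absurd rfl hw
    · rfl
  reflTransGen w hw := by
    obtain ⟨es, -, rfl, vs, -, hu, hv, hch⟩ := hP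
    have hw' : w = u ∨ w ∈ vs := by
      split_ifs at hw with hC
      · rcases hC with rfl | rfl | ⟨g, hg, hwg⟩
        · exact .inl rfl
        · exact .inr (List.mem_of_getLast? hv)
        · exact .inr (hch.mem_of_mem_ends (List.mem_toFinset.1 hg) hwg)
      · exact .inl hw
    rcases hw' with rfl | hw'
    · exact .refl
    · exact hch.reflTransGen_of_mem hu hw'
  map_eq_of_mem_ends f hf w hw := if_pos (.inr (.inr ⟨f, hf, hw⟩))

theorem isContraction_singleton [DecidableEq V] {e : E} {u v : V} (huv : u ≠ v)
    (he : ends e = s(u, v)) : IsContraction ends {e} u (fun w => if w = v then u else w) where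
  map_eq_self w hw := by
    split_ifs at hw ⊢
    · exact absurd rfl hw
    · rfl
  reflTransGen w hw := by
    split_ifs at hw with hwv
    · exact hwv ▸ .single ⟨e, Finset.mem_singleton_self e, he⟩
    · exact hw ▸ .refl
  map_eq_of_mem_ends f hf w hw := by
    rw [Finset.mem_singleton.1 hf, he, Sym2.mem_iff] at hw
    rcases hw with rfl | rfl <;> simp [huv]

end Contraction

section ForestSums

variable {V E : Type} [Fintype E] [DecidableEq E] {ends : E → Sym2 V}

noncomputable def forests (ends : E → Sym2 V) : Finset (Finset E) :=
  (univ : Finset E).powerset.filter fun F => ¬HasCycle ends F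

theorem zmult_eq_sum_forests (x : ℝ) : Zmult ends x = ∑ F ∈ forests ends, x ^ #F := by
  rw [Zmult, ZmultOn, sdiff_empty, forests]

theorem IsContraction.zmultOn_eq {P : Finset E} {u : V} {r : V → V}
    (hr : IsContraction ends P u r) (hP : ¬HasCycle ends P) (x : ℝ) :
    ZmultOn (fun f => (ends f).map r) P x =
      ∑ F ∈ (univ \ P).powerset.filter (fun F => ¬HasCycle ends (F ∪ P)), x ^ #F := by
  refine sum_congr (filter_congr fun F hF => ?_) fun _ _ => rfl
  rw [hr.hasCycle_iff hP (disjoint_of_subset_left (mem_powerset.1 hF) sdiff_disjoint)]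

theorem pow_card_mul_sum_powerset_sdiff (P : Finset E) (p : Finset E → Prop) [DecidablePred p]
    (x : ℝ) :
    x ^ #P * ∑ F ∈ (univ \ P).powerset.filter (fun F => p (F ∪ P)), x ^ #F =
      ∑ F ∈ (univ.powerset.filter p).filter (P ⊆ ·), x ^ #F := by
  rw [mul_sum]
  refine sum_nbij' (· ∪ P) (· \ P) (fun F hF => ?_) (fun F hF => ?_) (fun F hF => ?_)
    (fun F hF => ?_) (fun F hF => ?_) <;>
    simp only [mem_filter, mem_powerset, subset_univ, true_and] at hF ⊢
  · exact ⟨hF.2, subset_union_right⟩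
  · refine ⟨sdiff_subset_sdiff (subset_univ F) le_rfl, ?_⟩
    rw [sdiff_union_of_subset hF.2]
    exact hF.1
  · exact union_sdiff_cancel_right (disjoint_of_subset_left hF.1 sdiff_disjoint)
  · exact sdiff_union_of_subset hF.2
  · rw [card_union_of_disjoint (disjoint_of_subset_left hF.1 sdiff_disjoint), pow_add, mul_comm]

theorem filter_forests_not_exists_pathSet {e : E} {u v : V} (huv : u ≠ v)
    (he : ends e = s(u, v)) :
    (univ \ {e}).powerset.filter (fun F => ¬HasCycle ends (F ∪ {e})) =
      (forests ends).filter fun F => ¬∃ P ∈ pathSets ends u v, P ⊆ F := by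
  ext F
  simp only [forests, pathSets, mem_filter, mem_powerset, mem_univ, true_and, subset_univ,
    subset_sdiff, disjoint_singleton_right]
  by_cases heF : e ∈ F
  · simp only [heF, not_true_eq_false, false_and, false_iff, not_and, not_not]
    exact fun _ => ⟨{e}, isPathSet_singleton huv he, singleton_subset_iff.2 heF⟩
  · simp only [hasCycle_union_singleton_iff heF he, heF, not_false_eq_true, true_and, not_or,
      not_exists, not_and]
    exact and_congr_right fun _ => forall_congr' fun Q => ⟨fun h hQ hQF => h hQF hQ,
      fun h hQF hQ => h hQ hQF⟩

theorem sum_filter_exists_pathSet {u v : V} (f : Finset E → ℝ) :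
    ∑ F ∈ (forests ends).filter (fun F => ∃ P ∈ pathSets ends u v, P ⊆ F), f F =
      ∑ P ∈ pathSets ends u v, ∑ F ∈ (forests ends).filter (P ⊆ ·), f F := by
  rw [← sum_biUnion]
  · congr 1
    ext F
    simp only [mem_filter, mem_biUnion]
    tauto
  · intro P hP Q hQ hPQ
    refine disjoint_left.2 fun F hFP hFQ => hPQ ?_
    simp only [forests, pathSets, mem_filter, mem_coe, mem_univ, true_and] at hP hQ hFP hFQ
    exact hP.eq_of_not_hasCycle hQ hFP.1.2 hFP.2 hFQ.2

end ForestSums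

/-- Identity (4.2): for an edge `e = uv`,
`Z_G(x) = Z_{G/e}(x) + Σ_{P ∈ 𝓟_{G,u,v}} x^{|P|} Z_{G/P}(x)`, where contraction
identifies the vertices of the contracted edge/path (mapping them all to `u`) and
deletes the contracted edges (keeping any parallel edges and loops that arise). -/
theorem Zmult_contraction (ends : E → Sym2 V) (e : E) (u v : V) (huv : u ≠ v)
    (he : ends e = s(u, v)) (x : ℝ) :
    Zmult ends x =
      ZmultOn (fun f => (ends f).map fun w => if w = v then u else w) {e} x +
      ∑ P ∈ pathSets ends u v,
        x ^ P.card *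
          ZmultOn (fun f => (ends f).map fun w =>
            if w = u ∨ w = v ∨ ∃ g ∈ P, w ∈ ends g then u else w) P x := by
  have hpaths : ∀ P ∈ pathSets ends u v,
      x ^ #P * ZmultOn (fun f => (ends f).map fun w =>
          if w = u ∨ w = v ∨ ∃ g ∈ P, w ∈ ends g then u else w) P x =
        ∑ F ∈ (forests ends).filter (P ⊆ ·), x ^ #F := by
    intro P hPmem
    have hP : IsPathSet ends u v P := (mem_filter.1 hPmem).2
    rw [hP.isContraction.zmultOn_eq hP.not_hasCycle]
    exact pow_card_mul_sum_powerset_sdiff P (fun F => ¬HasCycle ends F) x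
  rw [(isContraction_singleton huv he).zmultOn_eq (isPathSet_singleton huv he).not_hasCycle,
    filter_forests_not_exists_pathSet huv he, sum_congr rfl hpaths, ← sum_filter_exists_pathSet,
    sum_filter_not_add_sum_filter, zmult_eq_sum_forests]
end

section
/- Let G = (V,E) be a finite simple graph, S ⊆ V, and y > 0. Then Σ_{F ∈ 𝓕_{G,S}} y^{|F|} ≤ Π_{s ∈ S} T_{G,s}(y), where 𝓕_{G,S} is the set of broken-circuit-free forests of G whose every non-trivial component contains at least one vertex of S, and T_{G,s}(y) = Σ_T y^{|T|} over subtrees T of G containing s. -/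
open Finset

attribute [local instance] Classical.propDecidable

variable {V : Type} [Fintype V] [DecidableEq V]

/-- Vertex support of an edge set: the non-isolated vertices. -/
def edgeSupp (F : Finset (Sym2 V)) : Finset V :=
  Finset.univ.filter fun v => ∃ e ∈ F, v ∈ e

/-- `C` is the edge set of a cycle of `G`. -/
def IsCircuit (G : SimpleGraph V) (C : Finset (Sym2 V)) : Prop :=
  ∃ (v : V) (w : G.Walk v v), w.IsCycle ∧ C = w.edges.toFinset

/-- `B` is a broken circuit of `G` w.r.t. the edge ordering `ord`. -/
def IsBrokenCircuit (G : SimpleGraph V) (ord : Sym2 V → ℕ) (B : Finset (Sym2 V)) : Prop :=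
  ∃ C, IsCircuit G C ∧ ∃ e ∈ C, (∀ f ∈ C, ord f ≤ ord e) ∧ B = C.erase e

/-- `F` is a broken-circuit-free set of edges of `G`. -/
def IsBCF (G : SimpleGraph V) (ord : Sym2 V → ℕ) (F : Finset (Sym2 V)) : Prop :=
  F ⊆ G.edgeFinset ∧ ∀ B, IsBrokenCircuit G ord B → ¬ B ⊆ F

/-- `F` is (the edge set of) a subtree of `G`: a connected acyclic edge subset. -/
def IsSubtree (G : SimpleGraph V) (F : Finset (Sym2 V)) : Prop :=
  F ⊆ G.edgeFinset ∧ (SimpleGraph.fromEdgeSet (↑F : Set (Sym2 V))).IsAcyclic ∧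
    ∀ a ∈ edgeSupp F, ∀ b ∈ edgeSupp F,
      (SimpleGraph.fromEdgeSet (↑F : Set (Sym2 V))).Reachable a b

/-- The rooted tree generating function `T_{G,v}(x)`. -/
noncomputable def treeSum (G : SimpleGraph V) (v : V) (x : ℝ) : ℝ :=
  ∑ F ∈ G.edgeFinset.powerset.filter
      (fun F => IsSubtree G F ∧ (F ≠ ∅ → v ∈ edgeSupp F)), x ^ F.card

/-!
A broken-circuit-free edge set contains no cycle, since a cycle minus its largest edge is a broken
circuit; so every `F ∈ 𝓕_{G,S}` is a forest. Rooting each component of `F` that meets `S` at one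
of its vertices in `S` splits `F` into pieces `T_s`, `s ∈ S`, each empty or a subtree containing
`s`. As `F` is the union of its pieces, `F ↦ (T_s)_s` is injective, and `y^{|F|} = ∏_s y^{|T_s|}`
is one of the (nonnegative, as `y > 0`) terms of the expanded product `∏_s T_{G,s}(y)`.
-/

namespace SimpleGraph

variable {W : Type*}

theorem reachable_fromEdgeSet_of_mem {s : Set (Sym2 W)} {e : Sym2 W} (he : e ∈ s) {x y : W}
    (hx : x ∈ e) (hy : y ∈ e) : (fromEdgeSet s).Reachable x y := by
  by_cases hxy : x = y
  · exact hxy ▸ Reachable.refl x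
  · have hexy : e = s(x, y) := (Sym2.mem_and_mem_iff hxy).mp ⟨hx, hy⟩
    exact ((fromEdgeSet_adj _).mpr ⟨hexy ▸ he, hxy⟩).reachable

noncomputable def ConnectedComponent.root {H : SimpleGraph W} (c : H.ConnectedComponent)
    (S : Finset W) : W :=
  if h : ∃ s ∈ S, H.connectedComponentMk s = c then h.choose else c.out

namespace ConnectedComponent

variable {H : SimpleGraph W} (c : H.ConnectedComponent) (S : Finset W)

theorem connectedComponentMk_root : H.connectedComponentMk (c.root S) = c := by
  unfold root
  split_ifs with h
  · exact h.choose_spec.2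
  · exact c.out_eq

theorem root_mem {s : W} (hs : s ∈ S) (hc : H.connectedComponentMk s = c) : c.root S ∈ S := by
  rw [root, dif_pos ⟨s, hs, hc⟩]
  exact (Exists.choose_spec (⟨s, hs, hc⟩ : ∃ s ∈ S, H.connectedComponentMk s = c)).1

end ConnectedComponent

/-- The piece `T_s` of the decomposition `F = ⋃_{s ∈ S} T_s`. -/
noncomputable def forestPiece (F : Finset (Sym2 W)) (S : Finset W) (s : W) : Finset (Sym2 W) :=
  F.filter fun e => ∀ v ∈ e, ((fromEdgeSet (F : Set (Sym2 W))).connectedComponentMk v).root S = s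

variable {F : Finset (Sym2 W)} {S : Finset W} {s : W}

theorem forestPiece_subset : forestPiece F S s ⊆ F :=
  filter_subset _ _

theorem mem_forestPiece {e : Sym2 W} (he : e ∈ F) {x : W} (hx : x ∈ e) :
    e ∈ forestPiece F S s ↔
      ((fromEdgeSet (F : Set (Sym2 W))).connectedComponentMk x).root S = s := by
  refine (mem_filter.trans (and_iff_right he)).trans ⟨fun h => h x hx, fun h v hv => ?_⟩
  rwa [ConnectedComponent.sound (reachable_fromEdgeSet_of_mem (s := (F : Set (Sym2 W))) he hv hx)]

theorem connectedComponentMk_eq_of_mem_forestPiece {e : Sym2 W} (he : e ∈ forestPiece F S s)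
    {v : W} (hv : v ∈ e) :
    (fromEdgeSet (F : Set (Sym2 W))).connectedComponentMk v =
      (fromEdgeSet (F : Set (Sym2 W))).connectedComponentMk s := by
  rw [← (mem_filter.mp he).2 v hv, ConnectedComponent.connectedComponentMk_root]

theorem disjoint_forestPiece {t : W} (hst : s ≠ t) :
    Disjoint (forestPiece F S s) (forestPiece F S t) := by
  refine Finset.disjoint_left.mpr fun e hes het => hst ?_
  exact ((mem_filter.mp hes).2 _ e.out_fst_mem).symm.trans ((mem_filter.mp het).2 _ e.out_fst_mem)

theorem biUnion_forestPiece
    (hS : ∀ e ∈ F, ∀ v ∈ e, ∃ s ∈ S, (fromEdgeSet (F : Set (Sym2 W))).Reachable v s) :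
    S.biUnion (forestPiece F S) = F := by
  refine (biUnion_subset.mpr fun _ _ => forestPiece_subset).antisymm fun e he => ?_
  obtain ⟨s, hs, hvs⟩ := hS e he _ e.out_fst_mem
  exact mem_biUnion.mpr ⟨_, ConnectedComponent.root_mem _ S hs (ConnectedComponent.sound hvs).symm,
    (mem_forestPiece he e.out_fst_mem).mpr rfl⟩

theorem card_eq_sum_card_forestPiece
    (hS : ∀ e ∈ F, ∀ v ∈ e, ∃ s ∈ S, (fromEdgeSet (F : Set (Sym2 W))).Reachable v s) :
    #F = ∑ s ∈ S, #(forestPiece F S s) := by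
  rw [← card_biUnion fun s _ t _ hst => disjoint_forestPiece hst, biUnion_forestPiece hS]

theorem eq_of_forestPiece_eq {F' : Finset (Sym2 W)}
    (hS : ∀ e ∈ F, ∀ v ∈ e, ∃ s ∈ S, (fromEdgeSet (F : Set (Sym2 W))).Reachable v s)
    (hS' : ∀ e ∈ F', ∀ v ∈ e, ∃ s ∈ S, (fromEdgeSet (F' : Set (Sym2 W))).Reachable v s)
    (h : ∀ s ∈ S, forestPiece F S s = forestPiece F' S s) : F = F' := by
  rw [← biUnion_forestPiece hS, ← biUnion_forestPiece hS']
  exact biUnion_congr rfl h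

theorem Walk.reachable_fromEdgeSet_forestPiece {a b : W}
    (w : (fromEdgeSet (F : Set (Sym2 W))).Walk a b)
    (ha : ((fromEdgeSet (F : Set (Sym2 W))).connectedComponentMk a).root S = s) :
    (fromEdgeSet (forestPiece F S s : Set (Sym2 W))).Reachable a b := by
  induction w with
  | nil => rfl
  | cons hadj p ih =>
    have hadjF := (fromEdgeSet_adj _).mp hadj
    have hpiece := (mem_forestPiece hadjF.1 (Sym2.mem_mk_left _ _)).mpr ha
    refine ((fromEdgeSet_adj _).mpr ⟨hpiece, hadjF.2⟩).reachable.trans (ih ?_)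
    rwa [← ConnectedComponent.sound hadj.reachable]

theorem reachable_fromEdgeSet_forestPiece {a b : W} {e e' : Sym2 W}
    (he : e ∈ forestPiece F S s) (ha : a ∈ e) (he' : e' ∈ forestPiece F S s) (hb : b ∈ e') :
    (fromEdgeSet (forestPiece F S s : Set (Sym2 W))).Reachable a b := by
  have hab := ConnectedComponent.exact ((connectedComponentMk_eq_of_mem_forestPiece he ha).trans
    (connectedComponentMk_eq_of_mem_forestPiece he' hb).symm)
  exact hab.some.reachable_fromEdgeSet_forestPiece ((mem_filter.mp he).2 a ha)

theorem exists_mem_forestPiece_root {e : Sym2 W} (he : e ∈ forestPiece F S s) :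
    ∃ e' ∈ forestPiece F S s, s ∈ e' := by
  have hs : ((fromEdgeSet (F : Set (Sym2 W))).connectedComponentMk s).root S = s := by
    rw [← connectedComponentMk_eq_of_mem_forestPiece he e.out_fst_mem]
    exact (mem_filter.mp he).2 _ e.out_fst_mem
  obtain ⟨w⟩ := ConnectedComponent.exact (connectedComponentMk_eq_of_mem_forestPiece he
    e.out_fst_mem).symm
  cases w with
  | nil => exact ⟨e, he, e.out_fst_mem⟩
  | cons hadj _ =>
    exact ⟨_, (mem_forestPiece hadj.1 (Sym2.mem_mk_left _ _)).mpr hs, Sym2.mem_mk_left _ _⟩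

end SimpleGraph

theorem Finset.sum_prod_le_prod_sum_of_injOn {ι κ β R : Type*} [DecidableEq ι]
    [CommSemiring R] [PartialOrder R] [IsOrderedRing R] (s : Finset ι) (𝓕 : Finset κ)
    (A : ι → Finset β) (P : κ → ι → β) (hP : ∀ F ∈ 𝓕, ∀ i ∈ s, P F i ∈ A i)
    (hinj : ∀ F ∈ 𝓕, ∀ F' ∈ 𝓕, (∀ i ∈ s, P F i = P F' i) → F = F')
    (w : ι → β → R) (hw : ∀ i ∈ s, ∀ b ∈ A i, 0 ≤ w i b) :
    ∑ F ∈ 𝓕, ∏ i ∈ s, w i (P F i) ≤ ∏ i ∈ s, ∑ b ∈ A i, w i b := by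
  let Φ : κ → (i : ι) → i ∈ s → β := fun F i _ => P F i
  have hΦ : Set.InjOn Φ 𝓕 := fun F hF F' hF' h =>
    hinj F hF F' hF' fun i hi => congr_fun (congr_fun h i) hi
  rw [prod_sum]
  calc ∑ F ∈ 𝓕, ∏ i ∈ s, w i (P F i)
      = ∑ p ∈ 𝓕.image Φ, ∏ i ∈ s.attach, w i (p i i.2) := by
        rw [sum_image hΦ]
        exact sum_congr rfl fun F _ => (prod_attach s fun i => w i (P F i)).symm
    _ ≤ ∑ p ∈ s.pi A, ∏ i ∈ s.attach, w i (p i i.2) := by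
        refine sum_le_sum_of_subset_of_nonneg ?_ fun p hp _ => ?_
        · exact image_subset_iff.mpr fun F hF => mem_pi.mpr (hP F hF)
        · exact prod_nonneg fun i _ => hw i i.2 _ (mem_pi.mp hp i i.2)

open SimpleGraph

theorem IsBCF.isAcyclic {G : SimpleGraph V} {ord : Sym2 V → ℕ} {F : Finset (Sym2 V)}
    (hF : IsBCF G ord F) : (fromEdgeSet (F : Set (Sym2 V))).IsAcyclic := by
  intro v c hc
  have hcF : ∀ e ∈ c.edges, e ∈ F := fun e he => by
    simpa using (edgeSet_fromEdgeSet _ ▸ c.edges_subset_edgeSet he).1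
  have hcG : ∀ e ∈ c.edges, e ∈ G.edgeSet := fun e he =>
    mem_edgeFinset.mp (hF.1 (hcF e he))
  set C := (c.transfer G hcG).edges.toFinset with hC
  have hCF : C ⊆ F := fun e he => hcF e (by simpa [hC, c.edges_transfer] using he)
  have hCne : C.Nonempty := by
    simpa [hC, c.edges_transfer, List.toFinset_nonempty_iff] using hc.ne_nil
  obtain ⟨e, heC, he_max⟩ := C.exists_max_image ord hCne
  exact hF.2 (C.erase e) ⟨C, ⟨v, _, hc.transfer hcG, rfl⟩, e, heC, he_max, rfl⟩
    ((erase_subset e C).trans hCF)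

theorem isSubtree_forestPiece {G : SimpleGraph V} {F : Finset (Sym2 V)}
    (hFG : F ⊆ G.edgeFinset) (hF : (fromEdgeSet (F : Set (Sym2 V))).IsAcyclic)
    (S : Finset V) (s : V) : IsSubtree G (forestPiece F S s) := by
  refine ⟨forestPiece_subset.trans hFG, hF.anti (fromEdgeSet_mono ?_), ?_⟩
  · exact_mod_cast forestPiece_subset
  · intro a ha b hb
    obtain ⟨e, he, hae⟩ := (mem_filter.mp ha).2
    obtain ⟨e', he', hbe'⟩ := (mem_filter.mp hb).2
    exact reachable_fromEdgeSet_forestPiece he hae he' hbe'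

theorem mem_edgeSupp_forestPiece {F : Finset (Sym2 V)} {S : Finset V} {s : V}
    (h : forestPiece F S s ≠ ∅) : s ∈ edgeSupp (forestPiece F S s) := by
  obtain ⟨e, he⟩ := nonempty_iff_ne_empty.mpr h
  exact mem_filter.mpr ⟨mem_univ _, exists_mem_forestPiece_root he⟩

theorem bcf_forest_le_prod_treeSum_general (G : SimpleGraph V) (ord : Sym2 V → ℕ)
    (S : Finset V) (y : ℝ) (hy : 0 < y) :
    ∑ F ∈ G.edgeFinset.powerset.filter (fun F => IsBCF G ord F ∧
        ∀ a ∈ edgeSupp F, ∃ s ∈ S,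
          (SimpleGraph.fromEdgeSet (↑F : Set (Sym2 V))).Reachable a s),
      y ^ F.card ≤ ∏ s ∈ S, treeSum G s y := by
  have hcover : ∀ F ∈ G.edgeFinset.powerset.filter (fun F => IsBCF G ord F ∧
      ∀ a ∈ edgeSupp F, ∃ s ∈ S, (fromEdgeSet (↑F : Set (Sym2 V))).Reachable a s),
      ∀ e ∈ F, ∀ v ∈ e, ∃ s ∈ S, (fromEdgeSet (↑F : Set (Sym2 V))).Reachable v s :=
    fun F hF e he v hv => (mem_filter.mp hF).2.2 v (mem_filter.mpr ⟨mem_univ v, e, he, hv⟩)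
  calc _ = ∑ F ∈ _, ∏ s ∈ S, y ^ #(forestPiece F S s) := by
        refine sum_congr rfl fun F hF => ?_
        rw [prod_pow_eq_pow_sum, ← card_eq_sum_card_forestPiece (hcover F hF)]
    _ ≤ ∏ s ∈ S, treeSum G s y := by
        refine sum_prod_le_prod_sum_of_injOn S _ _ _ (fun F hF s _ => ?_)
          (fun F hF F' hF' h => ?_) _ fun _ _ _ _ => pow_nonneg hy.le _
        · obtain ⟨-, hBCF, -⟩ := mem_filter.mp hF
          exact mem_filter.mpr ⟨mem_powerset.mpr (forestPiece_subset.trans hBCF.1),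
            isSubtree_forestPiece hBCF.1 hBCF.isAcyclic S s, mem_edgeSupp_forestPiece⟩
        · exact eq_of_forestPiece_eq (hcover F hF) (hcover F' hF') h

/-- Inequality (2.1): `Σ_{F ∈ 𝓕_{G,S}} y^{|F|} ≤ Π_{s ∈ S} T_{G,s}(y)`, where `𝓕_{G,S}`
is the set of BCF forests of `G` whose every non-trivial component meets `S`. -/
theorem bcf_forest_le_prod_treeSum (G : SimpleGraph V) (ord : Sym2 V → ℕ)
    (hord : Set.InjOn ord G.edgeSet) (S : Finset V) (y : ℝ) (hy : 0 < y) :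
    ∑ F ∈ G.edgeFinset.powerset.filter (fun F => IsBCF G ord F ∧
        ∀ a ∈ edgeSupp F, ∃ s ∈ S,
          (SimpleGraph.fromEdgeSet (↑F : Set (Sym2 V))).Reachable a s),
      y ^ F.card ≤ ∏ s ∈ S, treeSum G s y :=
  bcf_forest_le_prod_treeSum_general G ord S y hy
end

section
/- Let G = (V,E) be a finite simple graph with an edge ordering, let e be the smallest edge in the ordering, and let 𝓕_{G,e} denote the set of broken-circuit-free sets of G containing e. Then the map F ↦ F ∖ {e} is a bijection from 𝓕_{G,e} to the set of broken-circuit-free sets of the simple graph G/e obtained by contracting e and, among resulting parallel edges, keeping only the largest one (with the induced edge ordering). -/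
open Finset

attribute [local instance] Classical.propDecidable

variable {V : Type} [Fintype V] [DecidableEq V]

/-- The simple graph `G/e` obtained from `G` by contracting the edge `e = uv`,
i.e. mapping `v` to `u` (multiple edges are merged, loops discarded). -/
def contractEdge (G : SimpleGraph V) (u v : V) : SimpleGraph V where
  Adj a b := a ≠ b ∧ ∃ x y, G.Adj x y ∧
    (if x = v then u else x) = a ∧ (if y = v then u else y) = b
  symm := by
    constructor
    rintro a b ⟨hab, x, y, hxy, hx, hy⟩
    exact ⟨hab.symm, y, x, hxy.symm, hy, hx⟩
  loopless := ⟨fun a h => h.1 rfl⟩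

/-- The edge ordering induced on `G/e`: an edge of `G/e` receives the order value of
the largest edge of `G` mapping onto it (so among parallel edges only the largest is
kept, with its original position in the ordering). -/
noncomputable def contractOrd (G : SimpleGraph V) (u v : V) (ord : Sym2 V → ℕ) :
    Sym2 V → ℕ :=
  fun f => (G.edgeFinset.filter
    (fun g => g.map (fun w => if w = v then u else w) = f)).sup ord

/-!
An edge set `F` contains a broken circuit exactly when some edge `g = xy` has its ends joined
by the edges of `F` that precede `g`. If `e = uv` is the smallest edge and `e ∈ F`, then for
every edge `g ≠ e` these preceding edges include `e`, and identifying `v` with `u` does not change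
which vertices they connect. Broken circuits can therefore be moved from `G/e` to `G` and back.
The triangle argument works the same way. Suppose `f ∈ F ∖ {e}` is parallel in `G/e` to a larger
edge `h`. Then the ends of `h` are joined by `e` and `f`, which gives a broken circuit. So every
edge of `F ∖ {e}` is the largest edge of its parallel class. The inverse map sends `F'` to `e`
together with the largest preimage of each edge of `F'`.
-/

open SimpleGraph

theorem reachable_fromEdgeSet_map_iff {α β : Type*} (φ : α → β) {T : Set (Sym2 α)}
    (hfib : ∀ x y, φ x = φ y → (fromEdgeSet T).Reachable x y) {a b : α} :
    (fromEdgeSet (Sym2.map φ '' T)).Reachable (φ a) (φ b) ↔ (fromEdgeSet T).Reachable a b := by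
  simp only [reachable_iff_reflTransGen]
  constructor
  · suffices ∀ c d, Relation.ReflTransGen (fromEdgeSet (Sym2.map φ '' T)).Adj c d →
        ∀ a b, φ a = c → φ b = d → Relation.ReflTransGen (fromEdgeSet T).Adj a b from
      fun h => this _ _ h a b rfl rfl
    intro c d h
    induction h with
    | refl =>
      exact fun a b ha hb => (reachable_iff_reflTransGen _ _).1 (hfib a b (ha.trans hb.symm))
    | @tail d d' _ hdd' ih =>
      intro a b ha hb
      obtain ⟨⟨t, ht, hmap⟩, hne⟩ := hdd'
      induction t using Sym2.ind with
      | _ x y =>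
        obtain ⟨x, y, hxy, hx, hy⟩ : ∃ x y, s(x, y) ∈ T ∧ φ x = d ∧ φ y = d' := by
          rcases Sym2.eq_iff.1 hmap with ⟨hx, hy⟩ | ⟨hx, hy⟩
          · exact ⟨x, y, ht, hx, hy⟩
          · exact ⟨y, x, Sym2.eq_swap ▸ ht, hy, hx⟩
        have hyb := (reachable_iff_reflTransGen _ _).1 (hfib y b (hy.trans hb.symm))
        exact ((ih a x ha hx).tail ⟨hxy, fun h => hne (by rw [← hx, ← hy, h])⟩).trans hyb
  · refine fun h => Relation.ReflTransGen.lift' φ (fun x y hxy => ?_) a b h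
    by_cases h : φ x = φ y
    · simp only [Function.onFun, h, Relation.ReflTransGen.refl]
    · exact .single ⟨⟨s(x, y), hxy.1, rfl⟩, h⟩

theorem reachable_fromEdgeSet_iff_exists_isCycle {α : Type*} {H : SimpleGraph α} {x y : α}
    (hxy : H.Adj x y) {S : Set (Sym2 α)} (hS : S ⊆ H.edgeSet) (hxyS : s(x, y) ∉ S) :
    (fromEdgeSet S).Reachable x y ↔ ∃ (z : α) (c : H.Walk z z),
      c.IsCycle ∧ s(x, y) ∈ c.edges ∧ ∀ f ∈ c.edges, f = s(x, y) ∨ f ∈ S := by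
  have hdel : (fromEdgeSet (insert s(x, y) S)).deleteEdges {s(x, y)} = fromEdgeSet S := by
    rw [deleteEdges_fromEdgeSet, Set.insert_sdiff_self_of_notMem hxyS]
  have hcycle := adj_and_reachable_delete_edges_iff_exists_cycle
    (G := fromEdgeSet (insert s(x, y) S)) (v := x) (w := y)
  rw [hdel] at hcycle
  constructor
  · intro h
    obtain ⟨z, c, hc, hxyc⟩ := hcycle.1 ⟨⟨Set.mem_insert _ _, hxy.ne⟩, h⟩
    have hcS : ∀ f ∈ c.edges, f = s(x, y) ∨ f ∈ S := fun f hf => by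
      simpa using (edgeSet_fromEdgeSet _ ▸ c.edges_subset_edgeSet hf).1
    have hcH : ∀ f ∈ c.edges, f ∈ H.edgeSet := fun f hf =>
      (hcS f hf).elim (· ▸ hxy) (hS ·)
    exact ⟨z, c.transfer H hcH, hc.transfer hcH, by rwa [Walk.edges_transfer],
      by rwa [Walk.edges_transfer]⟩
  · rintro ⟨z, c, hc, hxyc, hcS⟩
    have hcK : ∀ f ∈ c.edges, f ∈ (fromEdgeSet (insert s(x, y) S)).edgeSet := fun f hf => by
      rw [edgeSet_fromEdgeSet]
      exact ⟨hcS f hf, H.not_isDiag_of_mem_edgeSet (c.edges_subset_edgeSet hf)⟩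
    exact (hcycle.2 ⟨z, c.transfer _ hcK, hc.transfer hcK, by rwa [Walk.edges_transfer]⟩).2

def edgesBelow {α : Type*} (F : Finset (Sym2 α)) (ord : Sym2 α → ℕ) (g : Sym2 α) :
    Set (Sym2 α) :=
  {f | f ∈ F ∧ f ≠ g ∧ ord f ≤ ord g}

theorem isBCF_iff_forall_not_reachable {α : Type} [Fintype α] [DecidableEq α]
    {H : SimpleGraph α} {ord : Sym2 α → ℕ} {F : Finset (Sym2 α)} :
    IsBCF H ord F ↔ F ⊆ H.edgeFinset ∧
      ∀ x y, H.Adj x y → ¬ (fromEdgeSet (edgesBelow F ord s(x, y))).Reachable x y := by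
  refine and_congr_right fun hF => ?_
  have hbelow : ∀ g, edgesBelow F ord g ⊆ H.edgeSet := fun g f hf => mem_edgeFinset.1 (hF hf.1)
  constructor
  · intro hbcf x y hxy hreach
    obtain ⟨z, c, hc, hxyc, hcS⟩ :=
      (reachable_fromEdgeSet_iff_exists_isCycle hxy (hbelow _) fun h => h.2.1 rfl).1 hreach
    refine hbcf _ ⟨_, ⟨z, c, hc, rfl⟩, s(x, y), List.mem_toFinset.2 hxyc, fun f hf => ?_, rfl⟩
      fun f hf => ?_
    · rcases hcS f (List.mem_toFinset.1 hf) with rfl | hf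
      exacts [le_rfl, hf.2.2]
    · obtain ⟨hfg, hf⟩ := Finset.mem_erase.1 hf
      exact ((hcS f (List.mem_toFinset.1 hf)).resolve_left hfg).1
  · rintro hbcf B ⟨C, ⟨z, c, hc, rfl⟩, g, hg, hmax, rfl⟩ hB
    have hgH := c.edges_subset_edgeSet (List.mem_toFinset.1 hg)
    induction g using Sym2.ind with
    | _ x y =>
      refine hbcf x y hgH ((reachable_fromEdgeSet_iff_exists_isCycle hgH (hbelow _)
        fun h => h.2.1 rfl).2 ⟨z, c, hc, List.mem_toFinset.1 hg, fun f hf => ?_⟩)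
      refine or_iff_not_imp_left.2 fun hfg => ?_
      exact ⟨hB (Finset.mem_erase.2 ⟨hfg, List.mem_toFinset.2 hf⟩), hfg,
        hmax f (List.mem_toFinset.2 hf)⟩

section Contraction

variable {α : Type} [DecidableEq α] {G : SimpleGraph α} {u v : α}

def contractMap (u v : α) (w : α) : α := if w = v then u else w

theorem contractMap_eq_contractMap_iff {x y : α} (hxy : x ≠ y) :
    contractMap u v x = contractMap u v y ↔ s(x, y) = s(u, v) := by
  unfold contractMap
  split_ifs <;> simp_all [eq_comm]

theorem isDiag_map_contractMap_self : (Sym2.map (contractMap u v) s(u, v)).IsDiag := by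
  by_cases huv : u = v <;> simp [contractMap, huv]

theorem reachable_of_contractMap_eq {T : Set (Sym2 α)} (hT : s(u, v) ∈ T) {x y : α}
    (h : contractMap u v x = contractMap u v y) : (fromEdgeSet T).Reachable x y := by
  by_cases hxy : x = y
  · exact hxy ▸ Reachable.refl _
  · exact Adj.reachable ((fromEdgeSet_adj _).2 ⟨(contractMap_eq_contractMap_iff hxy).1 h ▸ hT, hxy⟩)

theorem reachable_fromEdgeSet_contract_iff {T : Set (Sym2 α)} (hT : s(u, v) ∈ T) {a b : α} :
    (fromEdgeSet (Sym2.map (contractMap u v) '' T)).Reachable (contractMap u v a)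
      (contractMap u v b) ↔ (fromEdgeSet T).Reachable a b :=
  reachable_fromEdgeSet_map_iff _ fun _ _ => reachable_of_contractMap_eq hT

theorem map_contractMap_mem_edgeSet {f : Sym2 α} (hf : f ∈ G.edgeSet) (hfe : f ≠ s(u, v)) :
    Sym2.map (contractMap u v) f ∈ (contractEdge G u v).edgeSet := by
  induction f using Sym2.ind with
  | _ x y =>
    exact ⟨mt (contractMap_eq_contractMap_iff (G.ne_of_adj hf)).1 hfe, x, y, hf, rfl, rfl⟩

theorem exists_map_contractMap_eq {f' : Sym2 α} (hf' : f' ∈ (contractEdge G u v).edgeSet) :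
    ∃ f ∈ G.edgeSet, Sym2.map (contractMap u v) f = f' := by
  induction f' using Sym2.ind with
  | _ a b =>
    obtain ⟨-, x, y, hxy, rfl, rfl⟩ := hf'
    exact ⟨s(x, y), hxy, rfl⟩

variable [Fintype α]

theorem le_contractOrd (ord : Sym2 α → ℕ) {f : Sym2 α} (hf : f ∈ G.edgeSet) :
    ord f ≤ contractOrd G u v ord (Sym2.map (contractMap u v) f) :=
  Finset.le_sup (Finset.mem_filter.2 ⟨mem_edgeFinset.2 hf, rfl⟩)

theorem exists_contractOrd_eq (ord : Sym2 α → ℕ) {f' : Sym2 α}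
    (hf' : f' ∈ (contractEdge G u v).edgeSet) :
    ∃ f ∈ G.edgeSet, Sym2.map (contractMap u v) f = f' ∧ ord f = contractOrd G u v ord f' := by
  obtain ⟨f₀, hf₀, hmap⟩ := exists_map_contractMap_eq hf'
  obtain ⟨f, hf, hsup⟩ := Finset.exists_mem_eq_sup
    (G.edgeFinset.filter fun g => Sym2.map (contractMap u v) g = f')
    ⟨f₀, Finset.mem_filter.2 ⟨mem_edgeFinset.2 hf₀, hmap⟩⟩ ord
  obtain ⟨hfG, hfmap⟩ := Finset.mem_filter.1 hf
  exact ⟨f, mem_edgeFinset.1 hfG, hfmap, hsup.symm⟩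

/-- Junk value `f'` when `f'` is not an edge of `G/e`. -/
noncomputable def maxPreimage (G : SimpleGraph α) (u v : α) (ord : Sym2 α → ℕ) (f' : Sym2 α) :
    Sym2 α :=
  if h : ∃ f ∈ G.edgeSet, Sym2.map (contractMap u v) f = f' ∧ ord f = contractOrd G u v ord f'
  then h.choose else f'

theorem maxPreimage_spec (ord : Sym2 α → ℕ) {f' : Sym2 α}
    (hf' : f' ∈ (contractEdge G u v).edgeSet) :
    maxPreimage G u v ord f' ∈ G.edgeSet ∧
      Sym2.map (contractMap u v) (maxPreimage G u v ord f') = f' ∧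
      ord (maxPreimage G u v ord f') = contractOrd G u v ord f' := by
  have h := exists_contractOrd_eq ord hf'
  rw [maxPreimage, dif_pos h]
  exact h.choose_spec

theorem maxPreimage_ne (ord : Sym2 α → ℕ) {f' : Sym2 α}
    (hf' : f' ∈ (contractEdge G u v).edgeSet) : maxPreimage G u v ord f' ≠ s(u, v) := by
  intro he
  have hmap := (maxPreimage_spec ord hf').2.1
  rw [he] at hmap
  exact not_isDiag_of_mem_edgeSet _ hf' (hmap ▸ isDiag_map_contractMap_self)

end Contraction

section BrokenCircuitFree

variable {α : Type} [Fintype α] [DecidableEq α] {G : SimpleGraph α} {u v : α}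
  {ord : Sym2 α → ℕ}

theorem IsBCF.not_reachable_map_edgesBelow
    (hsmall : ∀ f ∈ G.edgeFinset, f ≠ s(u, v) → ord s(u, v) < ord f)
    {F : Finset (Sym2 α)} (hF : IsBCF G ord F) (he : s(u, v) ∈ F)
    {g : Sym2 α} (hg : g ∈ G.edgeSet) (hge : g ≠ s(u, v)) {x' y' : α}
    (hmap : Sym2.map (contractMap u v) g = s(x', y')) :
    ¬ (fromEdgeSet (Sym2.map (contractMap u v) '' edgesBelow F ord g)).Reachable x' y' := by
  induction g using Sym2.ind with
  | _ x y =>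
    have heg : s(u, v) ∈ edgesBelow F ord s(x, y) :=
      ⟨he, Ne.symm hge, (hsmall _ (mem_edgeFinset.2 hg) hge).le⟩
    have hxy := (isBCF_iff_forall_not_reachable.1 hF).2 x y hg
    rw [← reachable_fromEdgeSet_contract_iff heg] at hxy
    rcases Sym2.eq_iff.1 hmap with ⟨rfl, rfl⟩ | ⟨rfl, rfl⟩
    exacts [hxy, fun h => hxy h.symm]

theorem IsBCF.maxPreimage_map
    (hsmall : ∀ f ∈ G.edgeFinset, f ≠ s(u, v) → ord s(u, v) < ord f)
    {F : Finset (Sym2 α)} (hF : IsBCF G ord F) (he : s(u, v) ∈ F)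
    {f : Sym2 α} (hf : f ∈ F) (hfe : f ≠ s(u, v)) :
    maxPreimage G u v ord (Sym2.map (contractMap u v) f) = f := by
  have hfG := mem_edgeFinset.1 (hF.1 hf)
  have hf' := map_contractMap_mem_edgeSet hfG hfe
  obtain ⟨hgG, hmap, hordg⟩ := maxPreimage_spec ord hf'
  by_contra hgf
  induction f using Sym2.ind with
  | _ a b =>
    -- `e` and `f` join the ends of the larger parallel edge: the triangle's broken circuit
    refine hF.not_reachable_map_edgesBelow hsmall he hgG (maxPreimage_ne ord hf') hmap
      (Adj.reachable ((fromEdgeSet_adj _).2 ⟨⟨s(a, b), ⟨hf, Ne.symm hgf, ?_⟩, rfl⟩, hf'.1⟩))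
    exact hordg ▸ le_contractOrd ord hfG

theorem IsBCF.insert_image_maxPreimage_image_erase
    (hsmall : ∀ f ∈ G.edgeFinset, f ≠ s(u, v) → ord s(u, v) < ord f)
    {F : Finset (Sym2 α)} (hF : IsBCF G ord F) (he : s(u, v) ∈ F) :
    insert s(u, v) (((F.erase s(u, v)).image (Sym2.map (contractMap u v))).image
      (maxPreimage G u v ord)) = F := by
  have hinv : Set.EqOn (maxPreimage G u v ord ∘ Sym2.map (contractMap u v)) id
      (F.erase s(u, v) : Set (Sym2 α)) := fun f hf =>
    hF.maxPreimage_map hsmall he (Finset.mem_of_mem_erase hf) (Finset.ne_of_mem_erase hf)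
  rw [Finset.image_image, Finset.image_congr hinv, Finset.image_id, Finset.insert_erase he]

theorem image_erase_insert_image_maxPreimage {F' : Finset (Sym2 α)}
    (hF' : F' ⊆ (contractEdge G u v).edgeFinset) :
    ((insert s(u, v) (F'.image (maxPreimage G u v ord))).erase s(u, v)).image
      (Sym2.map (contractMap u v)) = F' := by
  have hinv : Set.EqOn (Sym2.map (contractMap u v) ∘ maxPreimage G u v ord) id
      (F' : Set (Sym2 α)) := fun f' hf' =>
    (maxPreimage_spec ord (mem_edgeFinset.1 (hF' hf'))).2.1
  have he : s(u, v) ∉ F'.image (maxPreimage G u v ord) := by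
    intro hmem
    obtain ⟨f', hf', heq⟩ := Finset.mem_image.1 hmem
    exact maxPreimage_ne ord (mem_edgeFinset.1 (hF' hf')) heq
  rw [Finset.erase_insert he, Finset.image_image, Finset.image_congr hinv, Finset.image_id]

theorem IsBCF.contract
    (hsmall : ∀ f ∈ G.edgeFinset, f ≠ s(u, v) → ord s(u, v) < ord f)
    {F : Finset (Sym2 α)} (hF : IsBCF G ord F) (he : s(u, v) ∈ F) :
    IsBCF (contractEdge G u v) (contractOrd G u v ord)
      ((F.erase s(u, v)).image (Sym2.map (contractMap u v))) := by
  refine isBCF_iff_forall_not_reachable.2 ⟨fun f' hf' => ?_, fun x' y' hxy' hreach => ?_⟩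
  · obtain ⟨f, hf, rfl⟩ := Finset.mem_image.1 hf'
    obtain ⟨hfe, hfF⟩ := Finset.mem_erase.1 hf
    exact mem_edgeFinset.2 (map_contractMap_mem_edgeSet (mem_edgeFinset.1 (hF.1 hfF)) hfe)
  obtain ⟨hgG, hmap, hordg⟩ := maxPreimage_spec ord (f' := s(x', y')) hxy'
  refine hF.not_reachable_map_edgesBelow hsmall he hgG
    (maxPreimage_ne ord (f' := s(x', y')) hxy') hmap (hreach.mono (fromEdgeSet_mono ?_))
  rintro f' ⟨hf'F, hf'g, hf'ord⟩
  obtain ⟨f, hf, rfl⟩ := Finset.mem_image.1 hf'F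
  have hfF := Finset.mem_of_mem_erase hf
  refine ⟨f, ⟨hfF, fun hfg => hf'g (hfg ▸ hmap), ?_⟩, rfl⟩
  calc ord f ≤ contractOrd G u v ord (Sym2.map (contractMap u v) f) :=
        le_contractOrd ord (mem_edgeFinset.1 (hF.1 hfF))
    _ ≤ _ := hf'ord
    _ = _ := hordg.symm

theorem fromEdgeSet_map_edgesBelow_le (hord : Set.InjOn ord G.edgeSet)
    {F' : Finset (Sym2 α)} (hF' : F' ⊆ (contractEdge G u v).edgeFinset)
    {g : Sym2 α} (hg : g ∈ G.edgeSet) :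
    fromEdgeSet (Sym2.map (contractMap u v) ''
        edgesBelow (insert s(u, v) (F'.image (maxPreimage G u v ord))) ord g) ≤
      fromEdgeSet (edgesBelow F' (contractOrd G u v ord) (Sym2.map (contractMap u v) g)) := by
  rintro a b ⟨⟨f, ⟨hfF, hfg, hford⟩, hfab⟩, hab⟩
  rcases Finset.mem_insert.1 hfF with rfl | hfF
  · exact absurd (Sym2.mk_isDiag_iff.1 (hfab ▸ isDiag_map_contractMap_self)) hab
  obtain ⟨f', hf', rfl⟩ := Finset.mem_image.1 hfF
  obtain ⟨hσG, hσmap, hσord⟩ := maxPreimage_spec ord (mem_edgeFinset.1 (hF' hf'))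
  rw [hσmap] at hfab
  subst hfab
  -- if `g` maps to `s(a, b)`, then `ord g ≤ ord (maxPreimage s(a, b))`; injectivity gives equality
  refine ⟨⟨hf', fun heq => hfg (hord hσG hg (hford.antisymm ?_)), ?_⟩, hab⟩
  · exact hσord ▸ heq ▸ le_contractOrd ord hg
  · exact hσord ▸ hford.trans (le_contractOrd ord hg)

theorem IsBCF.insert_image_maxPreimage (hord : Set.InjOn ord G.edgeSet)
    (hsmall : ∀ f ∈ G.edgeFinset, f ≠ s(u, v) → ord s(u, v) < ord f) (huv : G.Adj u v)
    {F' : Finset (Sym2 α)} (hF' : IsBCF (contractEdge G u v) (contractOrd G u v ord) F') :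
    IsBCF G ord (insert s(u, v) (F'.image (maxPreimage G u v ord))) := by
  set F := insert s(u, v) (F'.image (maxPreimage G u v ord))
  have hFG : F ⊆ G.edgeFinset := by
    refine Finset.insert_subset (mem_edgeFinset.2 huv) fun f hf => ?_
    obtain ⟨f', hf', rfl⟩ := Finset.mem_image.1 hf
    exact mem_edgeFinset.2 (maxPreimage_spec ord (mem_edgeFinset.1 (hF'.1 hf'))).1
  refine isBCF_iff_forall_not_reachable.2 ⟨hFG, fun x y hxy hreach => ?_⟩
  by_cases hge : s(x, y) = s(u, v)
  · have hbelow : edgesBelow F ord s(x, y) = ∅ :=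
      Set.eq_empty_of_forall_notMem fun f ⟨hfF, hfe, hford⟩ =>
        hford.not_gt (hge ▸ hsmall f (hFG hfF) (hge ▸ hfe))
    rw [hbelow, fromEdgeSet_empty, reachable_bot] at hreach
    exact hxy.ne hreach
  have heF : s(u, v) ∈ edgesBelow F ord s(x, y) :=
    ⟨Finset.mem_insert_self _ _, Ne.symm hge, (hsmall _ (mem_edgeFinset.2 hxy) hge).le⟩
  exact (isBCF_iff_forall_not_reachable.1 hF').2 _ _ (map_contractMap_mem_edgeSet hxy hge)
    (((reachable_fromEdgeSet_contract_iff heF).2 hreach).mono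
      (fromEdgeSet_map_edgesBelow_le hord hF'.1 hxy))

end BrokenCircuitFree

/-- Lemma (in the proof of Whitney's theorem): if `e = uv` is the smallest edge in the
ordering, then `F ↦ F ∖ {e}` (with edges relabelled by the contraction) is a bijection
from the BCF sets of `G` containing `e` to the BCF sets of `G/e` (with the induced
ordering, keeping only the largest of each class of parallel edges). -/
theorem bcf_contract_bijOn (G : SimpleGraph V) (ord : Sym2 V → ℕ)
    (hord : Set.InjOn ord G.edgeSet) (u v : V) (huv : G.Adj u v)
    (hsmall : ∀ f ∈ G.edgeFinset, f ≠ s(u, v) → ord s(u, v) < ord f) :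
    Set.BijOn
      (fun F : Finset (Sym2 V) =>
        (F.erase s(u, v)).image (Sym2.map fun w => if w = v then u else w))
      {F | IsBCF G ord F ∧ s(u, v) ∈ F}
      {F | IsBCF (contractEdge G u v) (contractOrd G u v ord) F} := by
  change Set.BijOn (fun F : Finset (Sym2 V) => (F.erase s(u, v)).image
    (Sym2.map (contractMap u v))) _ _
  refine Set.InvOn.bijOn (f' := fun F' => insert s(u, v) (F'.image (maxPreimage G u v ord)))
    ⟨fun F hF => hF.1.insert_image_maxPreimage_image_erase hsmall hF.2,
      fun F' hF' => image_erase_insert_image_maxPreimage hF'.1⟩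
    (fun F hF => hF.1.contract hsmall hF.2)
    (fun F' hF' => ⟨hF'.insert_image_maxPreimage hord hsmall huv, Finset.mem_insert_self _ _⟩)
end
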